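/- arXiv:1208.4213 — 3 statements merged into one kernel-verified Lean document; each statement's English description precedes it below -/
import Mathlib

section
/- If a symmetric bilinear form [·,·] on R^{f_P} (indexed by the faces of a polyhedron P) satisfies the local consistency condition [G, N_j] = Σ_{f∈∂P} |f| (x_f - x_P)_j G_f for all G ∈ R^{f_P} and j=1,2,3, where N_j = (n_f^P · (K e_j))_{f∈∂P} is the interpolant of the constant field K e_j, then [N_i, N_j] = |P| K_{ij} for all i,j = 1,2,3. -/
open Matrix

/-- If a symmetric bilinear form on face data satisfies the local consistency
condition `[G, N_j] = ∑_f |f| (x_f - x_P)_j G_f` where `N_j` is the interpolant `f ↦ n_f ⬝ K e_j`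
of the constant field `K e_j`, then `[N_i, N_j] = |P| K_{ij}` (using the geometric identity
`∑_f |f| (x_f - x_P) ⊗ n_f = |P| I`). -/
theorem consistency_implies_exactness_on_constants
    (m : ℕ) (area : Fin m → ℝ) (n : Fin m → Fin 3 → ℝ)
    (xf : Fin m → Fin 3 → ℝ) (xP : Fin 3 → ℝ) (vol : ℝ)
    (K : Matrix (Fin 3) (Fin 3) ℝ) (hKs : K.IsSymm)
    (hgeo : ∀ i j : Fin 3,
      ∑ f, area f * (xf f i - xP i) * n f j = vol * (if i = j then 1 else 0))
    (B : (Fin m → ℝ) → (Fin m → ℝ) → ℝ)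
    (hBadd : ∀ G₁ G₂ H, B (G₁ + G₂) H = B G₁ H + B G₂ H)
    (hBsmul : ∀ (c : ℝ) G H, B (c • G) H = c * B G H)
    (hBsymm : ∀ G H, B G H = B H G)
    (N : Fin 3 → Fin m → ℝ)
    (hN : ∀ j f, N j f = n f ⬝ᵥ K.mulVec (Pi.single j 1))
    (hcons : ∀ (G : Fin m → ℝ) (j : Fin 3),
      B G (N j) = ∑ f, area f * (xf f j - xP j) * G f) :
    ∀ i j : Fin 3, B (N i) (N j) = vol * K i j := by
  intro i j
  have hNval : ∀ k f, N k f = ∑ l, n f l * K l k := by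
    intro k f
    rw [hN k f]
    simp [dotProduct, mulVec, Pi.single_apply, Finset.mul_sum, mul_ite]
  rw [hcons (N i) j]
  calc ∑ f, area f * (xf f j - xP j) * N i f
      = ∑ f, ∑ l, area f * (xf f j - xP j) * n f l * K l i := by
        refine Finset.sum_congr rfl fun f _ => ?_
        rw [hNval, Finset.mul_sum]
        exact Finset.sum_congr rfl fun l _ => by ring
    _ = ∑ l, (∑ f, area f * (xf f j - xP j) * n f l) * K l i := by
        rw [Finset.sum_comm]
        exact Finset.sum_congr rfl fun l _ => (Finset.sum_mul ..).symm
    _ = vol * K i j := by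
        simp only [hgeo, ite_mul, one_mul, zero_mul, mul_ite, mul_zero, mul_one]
        rw [Finset.sum_ite_eq]
        simp [hKs.apply i j]
end

section
/- Let N and R be f_P × 3 real matrices with N of full rank 3, and suppose R^T N = |P| K for a symmetric positive definite 3×3 matrix K and |P| > 0. Let C be an f_P × (f_P − 3) matrix whose columns span the null space of N^T, and U an arbitrary symmetric positive definite (f_P−3)×(f_P−3) matrix. Then M = (1/|P|) R K^{-1} R^T + C U C^T is a symmetric matrix satisfying M N = R. -/
/-! The term `C U Cᵀ` is annihilated by `N` because the columns of `C` lie in the null space of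
`Nᵀ`, i.e. `Cᵀ N = 0`; the term `(1/|P|) R K⁻¹ Rᵀ` sends `N` to `R` because `Rᵀ N = |P| K`.
Symmetry follows from that of `K⁻¹` and `U`. -/

open Matrix

namespace Matrix

variable {l m n : Type*}

theorem mul_eq_zero_of_range_mulVec_subset [Fintype m] [Fintype n] {α : Type*} [Semiring α]
    {A : Matrix l m α} {C : Matrix m n α} (h : Set.range C.mulVec ⊆ {x | A *ᵥ x = 0}) :
    A * C = 0 :=
  ext_iff_mulVec.2 fun v => by
    rw [← mulVec_mulVec, zero_mulVec]
    exact h ⟨v, rfl⟩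

theorem IsSymm.mul_mul_transpose [Fintype n] {α : Type*} [CommSemiring α] {A : Matrix n n α}
    (hA : A.IsSymm) (B : Matrix m n α) :
    (B * A * Bᵀ).IsSymm := by
  rw [IsSymm, transpose_mul, transpose_mul, transpose_transpose, hA.eq, Matrix.mul_assoc]

theorem mul_inv_mul_transpose_mul_of_transpose_mul_eq_smul [Fintype m] [Fintype n] [DecidableEq n]
    {α : Type*} [CommRing α] {R N : Matrix m n α} {K : Matrix n n α} {c : α}
    (hK : IsUnit K.det) (hRN : Rᵀ * N = c • K) :
    R * K⁻¹ * Rᵀ * N = c • R := by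
  rw [Matrix.mul_assoc, hRN, Matrix.mul_smul, Matrix.mul_assoc, nonsing_inv_mul K hK,
    Matrix.mul_one]

end Matrix

theorem mfd_family_member_is_consistent_general
    (m : ℕ) (vol : ℝ) (hvol : 0 < vol)
    (K : Matrix (Fin 3) (Fin 3) ℝ) (hK : K.PosDef) (hKs : K.IsSymm)
    (N R : Matrix (Fin m) (Fin 3) ℝ)
    (hRN : Rᵀ * N = vol • K)
    (C : Matrix (Fin m) (Fin (m - 3)) ℝ)
    (hC : Set.range C.mulVec = {x | Nᵀ.mulVec x = 0})
    (U : Matrix (Fin (m - 3)) (Fin (m - 3)) ℝ) (hUs : U.IsSymm) :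
    (vol⁻¹ • (R * K⁻¹ * Rᵀ) + C * U * Cᵀ).IsSymm ∧
      (vol⁻¹ • (R * K⁻¹ * Rᵀ) + C * U * Cᵀ) * N = R := by
  refine ⟨((hKs.inv.mul_mul_transpose R).smul _).add (hUs.mul_mul_transpose C), ?_⟩
  have hCN : Cᵀ * N = 0 := by
    rw [← transpose_transpose (Cᵀ * N), transpose_mul, transpose_transpose,
      mul_eq_zero_of_range_mulVec_subset hC.le, transpose_zero]
  rw [Matrix.add_mul, Matrix.mul_assoc (C * U), hCN, Matrix.mul_zero, add_zero, Matrix.smul_mul,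
    mul_inv_mul_transpose_mul_of_transpose_mul_eq_smul hK.det_pos.ne'.isUnit hRN,
    smul_smul, inv_mul_cancel₀ hvol.ne', one_smul]

/-- With `N` of full rank `3`, `Rᵀ N = |P| K` for `K` SPD and `|P| > 0`,
`C` an `f_P × (f_P - 3)` matrix whose columns span the null space of `Nᵀ`, and `U` an arbitrary
SPD matrix, the matrix `M = (1/|P|) R K⁻¹ Rᵀ + C U Cᵀ` is symmetric and satisfies `M N = R`. -/
theorem mfd_family_member_is_consistent
    (m : ℕ) (vol : ℝ) (hvol : 0 < vol)
    (K : Matrix (Fin 3) (Fin 3) ℝ) (hK : K.PosDef) (hKs : K.IsSymm)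
    (N R : Matrix (Fin m) (Fin 3) ℝ)
    (hrank : N.rank = 3)
    (hRN : Rᵀ * N = vol • K)
    (C : Matrix (Fin m) (Fin (m - 3)) ℝ)
    (hC : Set.range C.mulVec = {x | Nᵀ.mulVec x = 0})
    (U : Matrix (Fin (m - 3)) (Fin (m - 3)) ℝ) (hU : U.PosDef) (hUs : U.IsSymm) :
    (vol⁻¹ • (R * K⁻¹ * Rᵀ) + C * U * Cᵀ).IsSymm ∧
      (vol⁻¹ • (R * K⁻¹ * Rᵀ) + C * U * Cᵀ) * N = R :=
  mfd_family_member_is_consistent_general m vol hvol K hK hKs N R hRN C hC U hUs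
end

section
/- Under the hypotheses N full rank, R^T N = |P| K with K symmetric positive definite, C spanning ker(N^T), and U symmetric positive definite, every symmetric matrix M satisfying M N = R is of the form M = (1/|P|) R K^{-1} R^T + C U' C^T for some symmetric matrix U', i.e., the family in the previous statement exhausts all symmetric solutions of the consistency condition. -/
open Matrix

/-- Under the same hypotheses (`N` full rank, `Rᵀ N = |P| K` with `K` SPD,
`C` spanning `ker Nᵀ`, `U` SPD), every symmetric matrix `M` with `M N = R` is of the form
`M = (1/|P|) R K⁻¹ Rᵀ + C U' Cᵀ` for some symmetric `U'`: the family exhausts all symmetric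
solutions of the consistency condition. -/
theorem mfd_family_exhausts_symmetric_solutions
    (m : ℕ) (vol : ℝ) (hvol : 0 < vol)
    (K : Matrix (Fin 3) (Fin 3) ℝ) (hK : K.PosDef) (hKs : K.IsSymm)
    (N R : Matrix (Fin m) (Fin 3) ℝ)
    (hrank : N.rank = 3)
    (hRN : Rᵀ * N = vol • K)
    (C : Matrix (Fin m) (Fin (m - 3)) ℝ)
    (hC : Set.range C.mulVec = {x | Nᵀ.mulVec x = 0})
    (U : Matrix (Fin (m - 3)) (Fin (m - 3)) ℝ) (hU : U.PosDef) (hUs : U.IsSymm)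
    (M : Matrix (Fin m) (Fin m) ℝ) (hM : M.IsSymm) (hMN : M * N = R) :
    ∃ U' : Matrix (Fin (m - 3)) (Fin (m - 3)) ℝ,
      U'.IsSymm ∧ M = vol⁻¹ • (R * K⁻¹ * Rᵀ) + C * U' * Cᵀ := by
  have hKdet : IsUnit K.det := isUnit_iff_ne_zero.mpr (ne_of_gt hK.det_pos)
  have hKinv : K⁻¹ * K = 1 := Matrix.nonsing_inv_mul K hKdet
  have hKinvs : K⁻¹ᵀ = K⁻¹ := by
    rw [Matrix.transpose_nonsing_inv, hKs.eq]
  -- The candidate base solution and the difference D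
  set M₀ : Matrix (Fin m) (Fin m) ℝ := vol⁻¹ • (R * K⁻¹ * Rᵀ) with hM₀
  set D : Matrix (Fin m) (Fin m) ℝ := M - M₀ with hD
  have hM₀N : M₀ * N = R := by
    rw [hM₀, Matrix.smul_mul, Matrix.mul_assoc, Matrix.mul_assoc]
    have h1 : Rᵀ * N = vol • K := hRN
    rw [h1, Matrix.mul_smul, hKinv, Matrix.mul_smul, Matrix.mul_one,
      smul_smul, inv_mul_cancel₀ (ne_of_gt hvol), one_smul]
  have hM₀s : M₀ᵀ = M₀ := by
    rw [hM₀, Matrix.transpose_smul, Matrix.transpose_mul, Matrix.transpose_mul,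
      Matrix.transpose_transpose, hKinvs, Matrix.mul_assoc]
  have hDs : Dᵀ = D := by
    rw [hD, Matrix.transpose_sub, hM.eq, hM₀s]
  have hDN : D * N = 0 := by
    rw [hD, Matrix.sub_mul, hMN, hM₀N, sub_self]
  have hND : Nᵀ * D = 0 := by
    calc Nᵀ * D = Nᵀ * Dᵀ := by rw [hDs]
    _ = (D * N)ᵀ := by rw [Matrix.transpose_mul]
    _ = 0 := by rw [hDN, Matrix.transpose_zero]
  -- Each column of D is in the range of C
  have hcol : ∀ j, ∃ v, C.mulVec v = fun i => D i j := by
    intro j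
    have hmem : (fun i => D i j) ∈ Set.range C.mulVec := by
      rw [hC]
      show Nᵀ.mulVec (fun i => D i j) = 0
      funext i
      have : (Nᵀ * D) i j = 0 := by rw [hND]; rfl
      simpa [Matrix.mulVec, dotProduct, Matrix.mul_apply] using this
    exact hmem
  -- The matrix V with C * V = D
  set V : Matrix (Fin (m - 3)) (Fin m) ℝ :=
    Matrix.of fun k j => (hcol j).choose k with hV
  have hCV : C * V = D := by
    ext i j
    have := (hcol j).choose_spec
    have h2 : C.mulVec (hcol j).choose i = D i j := by rw [this]
    simpa [Matrix.mul_apply, Matrix.mulVec, dotProduct, hV] using h2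
  -- C has trivial kernel, hence CᵀC is invertible
  have hCinj : Function.Injective C.mulVecLin := by
    have hrangeker : LinearMap.range C.mulVecLin = LinearMap.ker Nᵀ.mulVecLin := by
      apply Submodule.ext
      intro x
      constructor
      · rintro ⟨y, rfl⟩
        have h : C.mulVec y ∈ Set.range C.mulVec := ⟨y, rfl⟩
        rw [hC] at h
        simp only [LinearMap.mem_ker, Matrix.mulVecLin_apply]
        exact h
      · intro hx
        have h : x ∈ Set.range C.mulVec := by
          rw [hC]
          simp only [LinearMap.mem_ker, Matrix.mulVecLin_apply] at hx
          exact hx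
        obtain ⟨y, hy⟩ := h
        exact ⟨y, by simp only [Matrix.mulVecLin_apply]; exact hy⟩
    have hrankN : Module.finrank ℝ (LinearMap.range Nᵀ.mulVecLin) = 3 := by
      have : Nᵀ.rank = 3 := by rw [Matrix.rank_transpose, hrank]
      simpa [Matrix.rank] using this
    have hrn := LinearMap.finrank_range_add_finrank_ker Nᵀ.mulVecLin
    rw [hrankN] at hrn
    have hfm : Module.finrank ℝ (Fin m → ℝ) = m := by simp
    rw [hfm] at hrn
    have hker : Module.finrank ℝ (LinearMap.ker Nᵀ.mulVecLin) = m - 3 := by omega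
    have hrange : Module.finrank ℝ (LinearMap.range C.mulVecLin) = m - 3 := by
      rw [hrangeker, hker]
    have hrn2 := LinearMap.finrank_range_add_finrank_ker C.mulVecLin
    rw [hrange] at hrn2
    have hfm2 : Module.finrank ℝ (Fin (m - 3) → ℝ) = m - 3 := by simp
    rw [hfm2] at hrn2
    have : Module.finrank ℝ (LinearMap.ker C.mulVecLin) = 0 := by omega
    rw [Submodule.finrank_eq_zero] at this
    exact LinearMap.ker_eq_bot.mp this
  set G : Matrix (Fin (m - 3)) (Fin (m - 3)) ℝ := Cᵀ * C with hG
  have hGdet : IsUnit G.det := by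
    rw [isUnit_iff_ne_zero]
    intro h0
    obtain ⟨v, hv, hGv⟩ := Matrix.exists_mulVec_eq_zero_iff.mpr h0
    have hdot : (C.mulVec v) ⬝ᵥ (C.mulVec v) = 0 := by
      have h1 : v ⬝ᵥ (G *ᵥ v) = 0 := by rw [hGv]; simp
      rw [hG, ← Matrix.mulVec_mulVec, Matrix.dotProduct_mulVec,
        Matrix.vecMul_transpose] at h1
      exact h1
    have hCv : C.mulVec v = 0 := dotProduct_self_eq_zero.mp hdot
    have : v = 0 := by
      apply hCinj
      simpa [Matrix.mulVecLin_apply] using hCv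
    exact hv this
  have hGinv : G⁻¹ * G = 1 := Matrix.nonsing_inv_mul G hGdet
  have hGs : Gᵀ = G := by rw [hG, Matrix.transpose_mul, Matrix.transpose_transpose]
  have hGinvs : G⁻¹ᵀ = G⁻¹ := by rw [Matrix.transpose_nonsing_inv, hGs]
  -- the candidate U'
  refine ⟨G⁻¹ * Cᵀ * D * C * G⁻¹, ?_, ?_⟩
  · show (G⁻¹ * Cᵀ * D * C * G⁻¹)ᵀ = _
    calc (G⁻¹ * Cᵀ * D * C * G⁻¹)ᵀ
        = G⁻¹ᵀ * (Cᵀ * (Dᵀ * (Cᵀᵀ * G⁻¹ᵀ))) := by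
          simp only [Matrix.transpose_mul, Matrix.transpose_transpose, Matrix.mul_assoc]
    _ = G⁻¹ * Cᵀ * D * C * G⁻¹ := by
          rw [hGinvs, hDs, Matrix.transpose_transpose]
          simp only [Matrix.mul_assoc]
  · -- M = M₀ + C U' Cᵀ  since  C U' Cᵀ = D
    have hPD : C * (G⁻¹ * (Cᵀ * D)) = D := by
      have h1 : Cᵀ * D = G * V := by rw [← hCV, hG, Matrix.mul_assoc]
      rw [h1]
      have h2 : G⁻¹ * (G * V) = V := by
        rw [← Matrix.mul_assoc, hGinv, Matrix.one_mul]
      rw [h2, hCV]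
    have key : C * (G⁻¹ * Cᵀ * D * C * G⁻¹) * Cᵀ = D := by
      have h2 : C * (G⁻¹ * Cᵀ * D * C * G⁻¹) * Cᵀ
          = (C * (G⁻¹ * (Cᵀ * D))) * (C * (G⁻¹ * Cᵀ)) := by
        simp only [Matrix.mul_assoc]
      rw [h2, hPD]
      -- D * (C * (G⁻¹ * Cᵀ)) = D : transpose of the projection identity
      have h3 : (C * (G⁻¹ * Cᵀ))ᵀ * Dᵀ = Dᵀ := by
        have : (C * (G⁻¹ * Cᵀ))ᵀ = C * (G⁻¹ * Cᵀ) := by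
          simp only [Matrix.transpose_mul, Matrix.transpose_transpose, hGinvs]
          simp only [Matrix.mul_assoc]
        rw [this, hDs]
        calc C * (G⁻¹ * Cᵀ) * D = C * (G⁻¹ * (Cᵀ * D)) := by
              simp only [Matrix.mul_assoc]
        _ = D := hPD
      have := congrArg Matrix.transpose h3
      rw [Matrix.transpose_mul, Matrix.transpose_transpose,
        Matrix.transpose_transpose] at this
      exact this
    rw [key, hD, hM₀]
    abel
end
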